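/- Let σ ≠ 0 and c ∈ ℝ, and for λ ≠ 0 define S(λ) = √(4 + σ²λ²), z(λ) = −(2 + S(λ))/λ + c, and Γ(λ) = 3/4 − σ²λ²/(4·(2 + S(λ))²). Then Γ(λ) − 1 < 0 and z′(λ) = −1/(λ²·(Γ(λ) − 1)) for every λ ≠ 0. -/

import Mathlib

/-!
Write `s = √(4 + σ²λ²)`. Since `σ²λ² = (s - 2)(s + 2)`, the function `Γ` simplifies to
`Γ - 1 = -s / (2(2 + s))`, and the quotient rule with `s' = σ²λ / s` gives `z' = 2(2 + s) / (s λ²)`;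
the two expressions match.
-/

open Real

lemma three_div_four_sub_div_sub_one {t : ℝ} (ht : 0 ≤ 4 + t) :
    3 / 4 - t / (4 * (2 + √(4 + t)) ^ 2) - 1 = -√(4 + t) / (2 * (2 + √(4 + t))) := by
  have hs : √(4 + t) ^ 2 = 4 + t := sq_sqrt ht
  have hpos : 0 < 2 + √(4 + t) := by positivity
  field_simp
  linear_combination 2 * hs

lemma hasDerivAt_neg_two_add_sqrt_div {a x : ℝ} (h : 0 < 4 + a * x ^ 2) (hx : x ≠ 0) :
    HasDerivAt (fun y => -(2 + √(4 + a * y ^ 2)) / y)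
      (2 * (2 + √(4 + a * x ^ 2)) / (√(4 + a * x ^ 2) * x ^ 2)) x := by
  have hs : √(4 + a * x ^ 2) ^ 2 = 4 + a * x ^ 2 := sq_sqrt h.le
  have hs_pos : 0 < √(4 + a * x ^ 2) := sqrt_pos.mpr h
  have hradicand : HasDerivAt (fun y => 4 + a * y ^ 2) (a * (2 * x)) x := by
    simpa using ((hasDerivAt_pow 2 x).const_mul a).const_add 4
  refine (((hradicand.sqrt h.ne').const_add 2).neg.div (hasDerivAt_id' x) hx).congr_deriv ?_
  simp only [Pi.neg_apply]
  field_simp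
  linear_combination hs

theorem z_solves_ODE_Higgs (σ c : ℝ) :
    let S : ℝ → ℝ := fun l => Real.sqrt (4 + σ^2*l^2)
    let z : ℝ → ℝ := fun l => -(2 + S l)/l + c
    let Γ : ℝ → ℝ := fun l => 3/4 - σ^2*l^2/(4*(2 + S l)^2)
    ∀ l : ℝ, l ≠ 0 →
      Γ l - 1 < 0 ∧ deriv z l = -1/(l^2*(Γ l - 1)) := by
  intro S z Γ l hl
  have hradicand : 0 < 4 + σ ^ 2 * l ^ 2 := by positivity
  have hΓ : Γ l - 1 = -S l / (2 * (2 + S l)) := three_div_four_sub_div_sub_one hradicand.le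
  have hS : 0 < S l := sqrt_pos.mpr hradicand
  refine ⟨hΓ ▸ div_neg_of_neg_of_pos (neg_neg_of_pos hS) (by positivity), ?_⟩
  rw [((hasDerivAt_neg_two_add_sqrt_div hradicand hl).add_const c).deriv, hΓ]
  field_simp
  simp only [S]
  ring
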